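/- arXiv:2306.04110 — 2 statements merged into one kernel-verified Lean document; each statement's English description precedes it below -/
import Mathlib

section
/- For all integers n ≥ 2 and k ≥ 1, f(P_{2n+1}^k) = 1, where f(G) = min{Δ(G[S]) : S ⊆ V(G), |S| = α(G)+1}. -/
open Finset

/-- The path graph on vertex set `{1,…,m}`, realized on `Fin m`
(vertex `i : Fin m` stands for label `i+1`); label `i` is adjacent to label `i+1`. -/
def pathGraph' (m : ℕ) : SimpleGraph (Fin m) where
  Adj i j := (i : ℕ) + 1 = (j : ℕ) ∨ (j : ℕ) + 1 = (i : ℕ)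
  symm := by constructor; intro i j h; tauto
  loopless := by constructor; intro i h; omega

/-- The Cartesian (box) product of `k` copies of the path `P_m`:
two vertices are adjacent iff they differ in exactly one coordinate, and
in that coordinate they are adjacent in the path. -/
def boxPower (m k : ℕ) : SimpleGraph (Fin k → Fin m) where
  Adj u v := ∃ i, (pathGraph' m).Adj (u i) (v i) ∧ ∀ j, j ≠ i → u j = v j
  symm := by
    constructor
    rintro u v ⟨i, hadj, h⟩
    exact ⟨i, (pathGraph' m).adj_symm hadj, fun j hj => (h j hj).symm⟩
  loopless := by
    constructor
    rintro u ⟨i, hadj, -⟩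
    exact (pathGraph' m).irrefl hadj

/-- A finite set of vertices is independent if its vertices are pairwise nonadjacent. -/
def IsIndepFinset {V : Type*} (G : SimpleGraph V) (S : Finset V) : Prop :=
  ∀ u ∈ S, ∀ v ∈ S, ¬ G.Adj u v

/-- The independence number `α(G)` of a finite graph. -/
noncomputable def indepNum {V : Type*} [Fintype V] (G : SimpleGraph V) : ℕ :=
  sSup {n | ∃ S : Finset V, IsIndepFinset G S ∧ S.card = n}

open scoped Classical in
/-- The maximum degree `Δ(G[S])` of the subgraph of `G` induced on `S`. -/
noncomputable def maxDegOn {V : Type*} (G : SimpleGraph V) (S : Finset V) : ℕ :=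
  S.sup fun v => (S.filter fun u => G.Adj v u).card

/-- `f(G)`: the minimum, over vertex subsets `S` of size `α(G)+1`, of the maximum
degree of the induced subgraph `G[S]`. -/
noncomputable def minMaxDeg {V : Type*} [Fintype V] (G : SimpleGraph V) : ℕ :=
  sInf {d | ∃ S : Finset V, S.card = indepNum G + 1 ∧ maxDegOn G S = d}

/-!
Pairing the values `2j ↔ 2j + 1` of `{0, …, 2n}` in the first coordinate that is not `2n` is a
matching of `P_{2n+1}^k` covering every vertex except the all-`2n` corner, whose coordinate sum is
even. An independent set uses at most one end of each matching edge, so `α` is the number of even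
vertices, and any `α + 1` vertices span an edge, whence `f ≥ 1`.

For `f ≤ 1`, take the even vertices and complement membership on the slab `1 ≤ x_z ≤ 3`. The
signed count `∑ₓ (-1)^(Σ xᵢ) = (∑_c (-1)^c)^k = 1` and its twisted version with value `3` show that
this set has exactly one more element. Both ends of one of its edges lie in it but have different
parities, so the edge crosses the boundary of the slab in direction `z`: it joins the layers
`0, 1` or `3, 4`, and these edges form a matching.
-/

section IndependenceNumber

variable {V : Type*} {G : SimpleGraph V}

lemma IsIndepFinset.card_le_indepNum [Fintype V] {S : Finset V} (hS : IsIndepFinset G S) :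
    S.card ≤ indepNum G :=
  le_csSup ⟨Fintype.card V, by rintro _ ⟨T, -, rfl⟩; exact T.card_le_univ⟩ ⟨S, hS, rfl⟩

lemma indepNum_le [Fintype V] {b : ℕ} (h : ∀ S, IsIndepFinset G S → S.card ≤ b) :
    indepNum G ≤ b :=
  csSup_le ⟨0, ∅, by simp [IsIndepFinset], rfl⟩ (by rintro _ ⟨S, hS, rfl⟩; exact h S hS)

lemma one_le_maxDegOn_of_adj {S : Finset V} {u v : V} (hu : u ∈ S) (hv : v ∈ S)
    (huv : G.Adj u v) : 1 ≤ maxDegOn G S := by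
  classical
  unfold maxDegOn
  exact (Finset.card_pos.mpr ⟨v, Finset.mem_filter.mpr ⟨hv, huv⟩⟩).trans_le
    (Finset.le_sup (f := fun v => (S.filter fun u => G.Adj v u).card) hu)

lemma maxDegOn_le_one {S : Finset V}
    (h : ∀ v ∈ S, ∀ u ∈ S, ∀ w ∈ S, G.Adj v u → G.Adj v w → u = w) : maxDegOn G S ≤ 1 := by
  classical
  refine Finset.sup_le fun v hv => Finset.card_le_one.mpr fun u hu w hw => ?_
  rw [Finset.mem_filter] at hu hw
  exact h v hv u hu.1 w hw.1 hu.2 hw.2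

lemma one_le_maxDegOn_of_indepNum_lt [Fintype V] {S : Finset V} (h : indepNum G < S.card) :
    1 ≤ maxDegOn G S := by
  have hS : ¬ IsIndepFinset G S := fun hS => h.not_ge hS.card_le_indepNum
  simp only [IsIndepFinset, not_forall, not_not] at hS
  obtain ⟨u, hu, v, hv, huv⟩ := hS
  exact one_le_maxDegOn_of_adj hu hv huv

theorem minMaxDeg_eq_one_of_maxDegOn_le_one [Fintype V] {S : Finset V}
    (hcard : S.card = indepNum G + 1) (hdeg : maxDegOn G S ≤ 1) : minMaxDeg G = 1 := by
  have hS : maxDegOn G S ∈ {d | ∃ T : Finset V, T.card = indepNum G + 1 ∧ maxDegOn G T = d} :=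
    ⟨S, hcard, rfl⟩
  refine le_antisymm ((Nat.sInf_le hS).trans hdeg) (le_csInf ⟨_, hS⟩ ?_)
  rintro _ ⟨T, hT, rfl⟩
  exact one_le_maxDegOn_of_indepNum_lt (by omega)

end IndependenceNumber

section CoordinateSum

variable {m k : ℕ}

def coordSum (x : Fin k → Fin m) : ℕ := ∑ i, (x i : ℕ)

lemma coordSum_update (x : Fin k → Fin m) (i : Fin k) (c : Fin m) :
    coordSum (Function.update x i c) + x i = coordSum x + c := by
  unfold coordSum
  rw [← Finset.add_sum_erase _ _ (mem_univ i), ← Finset.add_sum_erase _ _ (mem_univ i),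
    Function.update_self, Finset.sum_congr rfl fun j hj => by
      rw [Function.update_of_ne (Finset.ne_of_mem_erase hj)]]
  ring

lemma boxPower_adj_update {x : Fin k → Fin m} {i : Fin k} {c : Fin m}
    (h : (pathGraph' m).Adj (x i) c) : (boxPower m k).Adj x (Function.update x i c) :=
  ⟨i, by rwa [Function.update_self], fun j hj => (Function.update_of_ne hj c x).symm⟩

lemma eq_update_of_boxPower_adj {u v : Fin k → Fin m} (h : (boxPower m k).Adj u v) :
    ∃ i, (pathGraph' m).Adj (u i) (v i) ∧ v = Function.update u i (v i) := by
  obtain ⟨i, hi, hother⟩ := h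
  refine ⟨i, hi, funext fun j => ?_⟩
  by_cases hj : j = i
  · subst hj; rw [Function.update_self]
  · rw [Function.update_of_ne hj, hother j hj]

lemma even_coordSum_iff_of_boxPower_adj {u v : Fin k → Fin m} (h : (boxPower m k).Adj u v) :
    Even (coordSum u) ↔ ¬ Even (coordSum v) := by
  obtain ⟨i, hi, hv⟩ := eq_update_of_boxPower_adj h
  have hsum := coordSum_update u i (v i)
  rw [← hv] at hsum
  simp only [pathGraph'] at hi
  simp only [Nat.even_iff]
  omega

def evenSet (m k : ℕ) : Finset (Fin k → Fin m) := univ.filter fun x => Even (coordSum x)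

lemma isIndepFinset_evenSet : IsIndepFinset (boxPower m k) (evenSet m k) := by
  intro u hu v hv huv
  simp only [evenSet, Finset.mem_filter] at hu hv
  exact (even_coordSum_iff_of_boxPower_adj huv).mp hu.2 hv.2

end CoordinateSum

section Matching

variable {n k : ℕ}

def pairSwap (c : Fin (2 * n + 1)) : Fin (2 * n + 1) :=
  if Even (c : ℕ) then ⟨min ((c : ℕ) + 1) (2 * n), by omega⟩ else ⟨(c : ℕ) - 1, by omega⟩

lemma val_pairSwap {c : Fin (2 * n + 1)} (hc : c ≠ Fin.last (2 * n)) :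
    (pairSwap c : ℕ) = if Even (c : ℕ) then (c : ℕ) + 1 else (c : ℕ) - 1 := by
  have := Fin.val_lt_last hc
  unfold pairSwap
  split_ifs with h
  · rw [Nat.even_iff] at h
    simp only
    omega
  · rfl

lemma pairSwap_ne_last {c : Fin (2 * n + 1)} (hc : c ≠ Fin.last (2 * n)) :
    pairSwap c ≠ Fin.last (2 * n) := by
  have := Fin.val_lt_last hc
  have h := val_pairSwap hc
  rw [Ne, Fin.ext_iff, Fin.val_last]
  split_ifs at h with he
  · rw [Nat.even_iff] at he
    omega
  · omega

lemma pathGraph'_adj_pairSwap {c : Fin (2 * n + 1)} (hc : c ≠ Fin.last (2 * n)) :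
    (pathGraph' (2 * n + 1)).Adj c (pairSwap c) := by
  have := Fin.val_lt_last hc
  have h := val_pairSwap hc
  simp only [pathGraph']
  split_ifs at h with he
  · omega
  · rw [Nat.even_iff] at he
    omega

lemma pairSwap_pairSwap {c : Fin (2 * n + 1)} (hc : c ≠ Fin.last (2 * n)) :
    pairSwap (pairSwap c) = c := by
  have h := val_pairSwap hc
  have h' := val_pairSwap (pairSwap_ne_last hc)
  have := Fin.val_lt_last hc
  ext
  simp only [Nat.even_iff] at h h'
  split_ifs at h h' <;> omega

def nonTop (x : Fin k → Fin (2 * n + 1)) : Finset (Fin k) :=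
  univ.filter fun i => x i ≠ Fin.last (2 * n)

def partner (x : Fin k → Fin (2 * n + 1)) : Fin k → Fin (2 * n + 1) :=
  if h : (nonTop x).Nonempty then
    Function.update x ((nonTop x).min' h) (pairSwap (x ((nonTop x).min' h)))
  else x

lemma min'_nonTop_ne_last {x : Fin k → Fin (2 * n + 1)} (h : (nonTop x).Nonempty) :
    x ((nonTop x).min' h) ≠ Fin.last (2 * n) :=
  (Finset.mem_filter.mp ((nonTop x).min'_mem h)).2

lemma partner_apply_ne_last_iff (x : Fin k → Fin (2 * n + 1)) (j : Fin k) :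
    partner x j ≠ Fin.last (2 * n) ↔ x j ≠ Fin.last (2 * n) := by
  unfold partner
  split_ifs with h
  · by_cases hj : j = (nonTop x).min' h
    · subst hj
      rw [Function.update_self]
      exact iff_of_true (pairSwap_ne_last (min'_nonTop_ne_last h)) (min'_nonTop_ne_last h)
    · rw [Function.update_of_ne hj]
  · rfl

lemma nonTop_partner (x : Fin k → Fin (2 * n + 1)) : nonTop (partner x) = nonTop x := by
  ext j
  simp only [nonTop, Finset.mem_filter, partner_apply_ne_last_iff]

lemma partner_partner (x : Fin k → Fin (2 * n + 1)) : partner (partner x) = x := by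
  by_cases h : (nonTop x).Nonempty
  · have h' : (nonTop (partner x)).Nonempty := (nonTop_partner x).symm ▸ h
    have hmin : (nonTop (partner x)).min' h' = (nonTop x).min' h := by
      simp only [nonTop_partner]
    rw [partner, dif_pos h', hmin, partner, dif_pos h]
    simp only [Function.update_self, Function.update_idem,
      pairSwap_pairSwap (min'_nonTop_ne_last h), Function.update_eq_self]
  · simp only [partner, dif_neg h]

lemma boxPower_adj_partner {x : Fin k → Fin (2 * n + 1)} (h : (nonTop x).Nonempty) :
    (boxPower (2 * n + 1) k).Adj x (partner x) := by
  rw [partner, dif_pos h]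
  exact boxPower_adj_update (pathGraph'_adj_pairSwap (min'_nonTop_ne_last h))

lemma nonTop_nonempty_of_not_even {x : Fin k → Fin (2 * n + 1)} (hx : ¬ Even (coordSum x)) :
    (nonTop x).Nonempty := by
  contrapose! hx
  have htop : ∀ i, (x i : ℕ) = 2 * n := fun i => by
    by_contra hi
    exact Finset.notMem_empty i (hx ▸ Finset.mem_filter.mpr ⟨mem_univ i, fun h => hi (h ▸ rfl)⟩)
  simp only [coordSum, htop, Finset.sum_const, smul_eq_mul]
  exact (even_two_mul n).mul_left _

lemma card_le_card_evenSet {S : Finset (Fin k → Fin (2 * n + 1))}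
    (hS : IsIndepFinset (boxPower (2 * n + 1) k) S) : S.card ≤ (evenSet (2 * n + 1) k).card := by
  classical
  let f : (Fin k → Fin (2 * n + 1)) → Fin k → Fin (2 * n + 1) := fun x =>
    if Even (coordSum x) then x else partner x
  have hf : ∀ x, Even (coordSum (f x)) := fun x => by
    by_cases hx : Even (coordSum x)
    · simp [f, hx]
    · simpa [f, hx] using
        (even_coordSum_iff_of_boxPower_adj (boxPower_adj_partner (nonTop_nonempty_of_not_even hx)))
  refine Finset.card_le_card_of_injOn f (fun x _ => Finset.mem_filter.mpr ⟨mem_univ _, hf x⟩) ?_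
  have hmixed : ∀ {x y}, x ∈ S → y ∈ S → Even (coordSum x) → ¬ Even (coordSum y) → f x ≠ f y := by
    intro x y hx hy hex hey hxy
    simp only [f, hex, hey, if_true, if_false] at hxy
    exact hS y hy x hx (hxy ▸ boxPower_adj_partner (nonTop_nonempty_of_not_even hey))
  intro x hx y hy hxy
  by_cases hex : Even (coordSum x) <;> by_cases hey : Even (coordSum y)
  · simpa [f, hex, hey] using hxy
  · exact absurd hxy (hmixed hx hy hex hey)
  · exact absurd hxy.symm (hmixed hy hx hey hex)
  · simpa [f, hex, hey, partner_partner] using congrArg partner hxy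

lemma indepNum_boxPower_odd :
    indepNum (boxPower (2 * n + 1) k) = (evenSet (2 * n + 1) k).card :=
  le_antisymm (indepNum_le fun _ => card_le_card_evenSet) isIndepFinset_evenSet.card_le_indepNum

end Matching

section SignSums

lemma two_mul_card_filter_eq {V : Type*} [Fintype V] (p : V → Prop) [DecidablePred p] :
    2 * ((univ.filter p).card : ℤ) = Fintype.card V + ∑ x, if p x then (1 : ℤ) else -1 := by
  rw [Finset.sum_ite, Finset.sum_const, Finset.sum_const, ← Finset.card_univ,
    ← Finset.card_filter_add_card_filter_not (s := univ) p]
  simp only [nsmul_eq_mul, mul_one, mul_neg, Nat.cast_add]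
  ring

lemma ite_even_iff_eq_neg_one_pow_mul (a : ℕ) (P : Prop) [Decidable P] :
    (if (Even a ↔ P) then (1 : ℤ) else -1) = (-1) ^ a * if P then 1 else -1 := by
  rcases Nat.even_or_odd a with ha | ha
  · by_cases hP : P <;> simp [ha, hP, ha.neg_one_pow]
  · by_cases hP : P <;> simp [Nat.not_even_iff_odd.mpr ha, hP, ha.neg_one_pow]

variable {m k : ℕ}

lemma sum_neg_one_pow_coordSum_mul (z : Fin k) (g : Fin m → ℤ) :
    ∑ x : Fin k → Fin m, (-1) ^ coordSum x * g (x z) =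
      (∑ c : Fin m, (-1) ^ (c : ℕ) * g c) * (∑ c : Fin m, (-1) ^ (c : ℕ)) ^ (k - 1) := by
  let h : Fin k → Fin m → ℤ := fun i c => (-1) ^ (c : ℕ) * if i = z then g c else 1
  have hx : ∀ x : Fin k → Fin m, (-1) ^ coordSum x * g (x z) = ∏ i, h i (x i) := fun x => by
    simp only [h, Finset.prod_mul_distrib, Finset.prod_pow_eq_pow_sum, coordSum,
      Finset.prod_ite_eq', mem_univ, if_true]
  rw [Finset.sum_congr rfl fun x _ => hx x, ← Fintype.prod_sum, Fintype.prod_eq_mul_prod_compl z]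
  congr 1
  · simp [h]
  · have hcompl : ∀ i ∈ ({z}ᶜ : Finset (Fin k)), ∑ c, h i c = ∑ c : Fin m, (-1) ^ (c : ℕ) :=
      fun i hi => by
        rw [Finset.mem_compl, Finset.mem_singleton] at hi
        simp [h, hi]
    rw [Finset.prod_congr rfl hcompl, prod_const, card_compl, card_singleton, Fintype.card_fin]

lemma sum_neg_one_pow_fin_odd (n : ℕ) : ∑ c : Fin (2 * n + 1), (-1 : ℤ) ^ (c : ℕ) = 1 := by
  rw [Fin.sum_univ_eq_sum_range (fun c => (-1 : ℤ) ^ c)]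
  induction n with
  | zero => simp
  | succ n ih =>
    rw [show 2 * (n + 1) + 1 = 2 * n + 1 + 1 + 1 by ring, sum_range_succ, sum_range_succ, ih]
    simp [pow_succ, pow_mul]

def slabSign (c : ℕ) : ℤ := if 1 ≤ c ∧ c ≤ 3 then -1 else 1

lemma sum_range_neg_one_pow_mul_slabSign {N : ℕ} (hN : 4 ≤ N) :
    ∑ c ∈ range N, (-1 : ℤ) ^ c * slabSign c = ∑ c ∈ range N, (-1 : ℤ) ^ c + 2 := by
  induction N, hN using Nat.le_induction with
  | base => simp [sum_range_succ, slabSign]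
  | succ N hN ih =>
    rw [sum_range_succ, sum_range_succ, ih, slabSign, if_neg (by omega)]
    ring

lemma sum_neg_one_pow_mul_slabSign {n : ℕ} (hn : 2 ≤ n) :
    ∑ c : Fin (2 * n + 1), (-1 : ℤ) ^ (c : ℕ) * slabSign c = 3 := by
  rw [Fin.sum_univ_eq_sum_range (fun c => (-1 : ℤ) ^ c * slabSign c),
    sum_range_neg_one_pow_mul_slabSign (by omega),
    ← Fin.sum_univ_eq_sum_range (fun c => (-1 : ℤ) ^ c), sum_neg_one_pow_fin_odd]
  norm_num

end SignSums

section NearIndependentSet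

variable {m k : ℕ}

def nearIndepSet (z : Fin k) : Finset (Fin k → Fin m) :=
  univ.filter fun x => (Even (coordSum x) ↔ ¬ (1 ≤ (x z : ℕ) ∧ (x z : ℕ) ≤ 3))

lemma boxPower_adj_of_mem_nearIndepSet {z : Fin k} {u v : Fin k → Fin m}
    (hu : u ∈ nearIndepSet z) (hv : v ∈ nearIndepSet z) (huv : (boxPower m k).Adj u v) :
    v = Function.update u z (v z) ∧ (pathGraph' m).Adj (u z) (v z) ∧
      (1 ≤ (u z : ℕ) ∧ (u z : ℕ) ≤ 3 ↔ ¬ (1 ≤ (v z : ℕ) ∧ (v z : ℕ) ≤ 3)) := by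
  obtain ⟨i, hi, hvu⟩ := eq_update_of_boxPower_adj huv
  have hparity := even_coordSum_iff_of_boxPower_adj huv
  simp only [nearIndepSet, Finset.mem_filter, mem_univ, true_and] at hu hv
  have hslab : 1 ≤ (u z : ℕ) ∧ (u z : ℕ) ≤ 3 ↔ ¬ (1 ≤ (v z : ℕ) ∧ (v z : ℕ) ≤ 3) := by tauto
  obtain rfl : i = z := by
    by_contra hiz
    have hz : v z = u z := by rw [hvu, Function.update_of_ne (Ne.symm hiz)]
    rw [hz] at hslab
    tauto
  exact ⟨hvu, hi, hslab⟩

lemma maxDegOn_nearIndepSet_le_one (z : Fin k) :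
    maxDegOn (boxPower m k) (nearIndepSet z) ≤ 1 := by
  refine maxDegOn_le_one fun v hv u hu w hw hvu hvw => ?_
  obtain ⟨hu, hadju, hslabu⟩ := boxPower_adj_of_mem_nearIndepSet hv hu hvu
  obtain ⟨hw, hadjw, hslabw⟩ := boxPower_adj_of_mem_nearIndepSet hv hw hvw
  have huw : u z = w z := by
    simp only [pathGraph'] at hadju hadjw
    ext
    omega
  rw [hu, hw, huw]

lemma card_nearIndepSet {n : ℕ} (hn : 2 ≤ n) (z : Fin k) :
    (nearIndepSet z : Finset (Fin k → Fin (2 * n + 1))).card =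
      (evenSet (2 * n + 1) k).card + 1 := by
  have hE := two_mul_card_filter_eq fun x : Fin k → Fin (2 * n + 1) => Even (coordSum x)
  have hW := two_mul_card_filter_eq fun x : Fin k → Fin (2 * n + 1) =>
    (Even (coordSum x) ↔ ¬ (1 ≤ (x z : ℕ) ∧ (x z : ℕ) ≤ 3))
  have hsumE : ∑ x : Fin k → Fin (2 * n + 1), (if Even (coordSum x) then (1 : ℤ) else -1) = 1 := by
    simp_rw [← neg_one_pow_eq_ite]
    simpa [sum_neg_one_pow_fin_odd] using
      sum_neg_one_pow_coordSum_mul z fun _ : Fin (2 * n + 1) => (1 : ℤ)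
  have hsumW : ∑ x : Fin k → Fin (2 * n + 1),
      (if (Even (coordSum x) ↔ ¬ (1 ≤ (x z : ℕ) ∧ (x z : ℕ) ≤ 3)) then (1 : ℤ) else -1) = 3 := by
    have h := sum_neg_one_pow_coordSum_mul z fun c : Fin (2 * n + 1) => slabSign c
    rw [sum_neg_one_pow_mul_slabSign hn, sum_neg_one_pow_fin_odd, one_pow, mul_one] at h
    simp_rw [ite_even_iff_eq_neg_one_pow_mul, ite_not]
    simpa [slabSign] using h
  simp only [nearIndepSet, evenSet]
  omega

end NearIndependentSet

/-- For all integers `n ≥ 2` and `k ≥ 1`, `f(P_{2n+1}^k) = 1`. -/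
theorem minMaxDeg_boxPower_odd (n k : ℕ) (hn : 2 ≤ n) (hk : 1 ≤ k) :
    minMaxDeg (boxPower (2 * n + 1) k) = 1 := by
  let z : Fin k := ⟨0, hk⟩
  refine minMaxDeg_eq_one_of_maxDegOn_le_one ?_ (maxDegOn_nearIndepSet_le_one z)
  rw [indepNum_boxPower_odd, card_nearIndepSet hn z]
end

section
/- For every integer k ≥ 1, there exists a set S of vertices of P_3^k with |S| = (3^k + 1)/2 + 1 = α(P_3^k) + 1 such that the induced subgraph P_3^k[S] has maximum degree exactly 2. -/
open Finset

/-! Adjacent vertices of `P_3^k` have coordinate sums of opposite parity, so the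
`(3^k + 1)/2` vertices of even sum form an independent set. Swapping `0 ↔ 1` in the first
coordinate different from `2` is a matching covering every vertex except `(2, …, 2)`, so no
independent set is larger.

For `S` take the vertices whose coordinates after the first have even sum:
`|S| = 3 · (3^(k-1) + 1)/2 = α(P_3^k) + 1`, and two vertices of `S` are adjacent only when
they differ in the first coordinate alone, so `P_3^k[S]` is a disjoint union of copies of
`P_3`. -/

theorem pathGraph'_adj {m : ℕ} {i j : Fin m} :
    (pathGraph' m).Adj i j ↔ (i : ℕ) + 1 = j ∨ (j : ℕ) + 1 = i := Iff.rfl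

variable {V : Type*} {G : SimpleGraph V}

theorem indepNum_eq_card [Fintype V] {S : Finset V}
    (hS : IsIndepFinset G S) (hmax : ∀ T, IsIndepFinset G T → T.card ≤ S.card) :
    indepNum G = S.card :=
  IsGreatest.csSup_eq ⟨⟨S, hS, rfl⟩, by rintro _ ⟨T, hT, rfl⟩; exact hmax T hT⟩

/-- An independent set meets its image under `φ` in at most the point `φ v₀`. -/
theorem IsIndepFinset.two_mul_card_le [Fintype V] [DecidableEq V] {φ : V → V}
    (hφ : φ.Injective) {v₀ : V} (hadj : ∀ v, v ≠ v₀ → G.Adj v (φ v)) {S : Finset V}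
    (hS : IsIndepFinset G S) : 2 * S.card ≤ Fintype.card V + 1 := by
  have hinter : S ∩ S.image φ ⊆ {φ v₀} := by
    intro x hx
    obtain ⟨hxS, w, hwS, rfl⟩ : x ∈ S ∧ ∃ w ∈ S, φ w = x := by simpa using hx
    by_cases hw : w = v₀
    · simp [hw]
    · exact absurd (hadj w hw) (hS w hwS _ hxS)
  have hsum := card_union_add_card_inter S (S.image φ)
  rw [card_image_of_injective S hφ] at hsum
  have hunion := card_le_univ (S ∪ S.image φ)
  have hone : (S ∩ S.image φ).card ≤ 1 := card_le_card hinter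
  omega

variable {m k : ℕ}

def weight (u : Fin k → Fin m) : ℕ := ∑ i, (u i : ℕ)

theorem even_weight_iff_of_adj {u v : Fin k → Fin m} (h : (boxPower m k).Adj u v) :
    Even (weight u) ↔ ¬Even (weight v) := by
  obtain ⟨i, hi, heq⟩ := h
  have hrest : ∑ j ∈ univ.erase i, (u j : ℕ) = ∑ j ∈ univ.erase i, (v j : ℕ) :=
    sum_congr rfl fun j hj => by rw [heq j (ne_of_mem_erase hj)]
  simp only [weight, ← add_sum_erase _ _ (mem_univ i), hrest]
  rcases hi with hi | hi <;> rw [← hi] <;> simp [add_right_comm _ 1, Nat.even_add_one]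

def evenVertices (m k : ℕ) : Finset (Fin k → Fin m) := univ.filter fun u => Even (weight u)

theorem isIndepFinset_evenVertices : IsIndepFinset (boxPower m k) (evenVertices m k) := by
  intro u hu v hv huv
  simp only [evenVertices, mem_filter, mem_univ, true_and] at hu hv
  exact (even_weight_iff_of_adj huv).1 hu hv

/-- Applies `σ` at the first coordinate it moves. -/
def swapFirst (σ : Fin m → Fin m) (u : Fin k → Fin m) : Fin k → Fin m :=
  fun i => if ∀ j < i, σ (u j) = u j then σ (u i) else u i

section swapFirst

variable {σ : Fin m → Fin m}

theorem swapFirst_apply_fixed_iff (hσ : Function.Involutive σ) (u : Fin k → Fin m)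
    (i : Fin k) :
    σ (swapFirst σ u i) = swapFirst σ u i ↔ σ (u i) = u i := by
  unfold swapFirst
  split_ifs
  · rw [hσ]; exact eq_comm
  · rfl

theorem swapFirst_involutive (hσ : Function.Involutive σ) :
    Function.Involutive (swapFirst σ : (Fin k → Fin m) → _) := by
  intro u
  funext i
  change (if _ then _ else _) = _
  simp only [swapFirst_apply_fixed_iff hσ]
  unfold swapFirst
  split_ifs <;> simp [hσ _]

theorem adj_swapFirst (hσ : ∀ x, σ x ≠ x → (pathGraph' m).Adj x (σ x)) {u : Fin k → Fin m}
    (hu : ∃ i, σ (u i) ≠ u i) : (boxPower m k).Adj u (swapFirst σ u) := by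
  obtain ⟨i, hi, hmin⟩ := wellFounded_lt.has_min {i | σ (u i) ≠ u i} hu
  have hfix : ∀ j < i, σ (u j) = u j := fun j hj => not_not.1 fun h => hmin j h hj
  refine ⟨i, ?_, fun j hj => ?_⟩
  · simpa only [swapFirst, if_pos hfix] using hσ _ hi
  · unfold swapFirst
    split_ifs with h
    · rcases hj.lt_or_gt with hji | hij
      · exact (hfix j hji).symm
      · exact absurd (h i hij) hi
    · rfl

end swapFirst

theorem weight_const_two : Even (weight (fun _ : Fin k => (2 : Fin 3))) := by
  simp [weight]

/-- Swapping `0` and `1` in the first coordinate that is not `2` matches all vertices but one. -/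
theorem exists_injective_adj_boxPower_three (k : ℕ) :
    ∃ φ : (Fin k → Fin 3) → (Fin k → Fin 3), φ.Injective ∧
      ∀ u, u ≠ (fun _ => 2) → (boxPower 3 k).Adj u (φ u) := by
  have hσ : ∀ x : Fin 3, Equiv.swap 0 1 x ≠ x → (pathGraph' 3).Adj x (Equiv.swap 0 1 x) := by
    simp only [pathGraph'_adj]; decide
  have hfix : ∀ x : Fin 3, Equiv.swap 0 1 x = x ↔ x = 2 := by decide
  refine ⟨swapFirst (Equiv.swap 0 1),
    (swapFirst_involutive (Equiv.swap_apply_self 0 1)).injective, fun u hu => adj_swapFirst hσ ?_⟩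
  contrapose! hu
  exact funext fun i => (hfix _).1 (hu i)

theorem two_mul_card_le_of_isIndepFinset {T : Finset (Fin k → Fin 3)}
    (hT : IsIndepFinset (boxPower 3 k) T) : 2 * T.card ≤ 3 ^ k + 1 := by
  obtain ⟨φ, hφ, hadj⟩ := exists_injective_adj_boxPower_three k
  simpa using hT.two_mul_card_le hφ hadj

theorem two_mul_card_evenVertices : 2 * (evenVertices 3 k).card = 3 ^ k + 1 := by
  obtain ⟨φ, hφ, hadj⟩ := exists_injective_adj_boxPower_three k
  have hodd : (univ.filter fun u : Fin k → Fin 3 => ¬Even (weight u)).card ≤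
      (evenVertices 3 k).card := by
    refine card_le_card_of_injOn φ (fun u hu => ?_) hφ.injOn
    replace hu : ¬Even (weight u) := (mem_filter.1 hu).2
    have hne : u ≠ fun _ => 2 := by rintro rfl; exact hu weight_const_two
    exact mem_filter.2 ⟨mem_univ _, not_not.1 (mt (even_weight_iff_of_adj (hadj u hne)).2 hu)⟩
  have htotal : (evenVertices 3 k).card +
      (univ.filter fun u : Fin k → Fin 3 => ¬Even (weight u)).card = 3 ^ k := by
    simpa [evenVertices] using
      card_filter_add_card_filter_not (s := univ) fun u : Fin k → Fin 3 => Even (weight u)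
  have hle := two_mul_card_le_of_isIndepFinset (isIndepFinset_evenVertices (m := 3) (k := k))
  -- `3 ^ k ≤ 2 * #(evenVertices 3 k) ≤ 3 ^ k + 1`, and `3 ^ k` is odd
  obtain ⟨r, hr⟩ : Odd (3 ^ k) := Odd.pow (by decide)
  omega

theorem indepNum_boxPower_three : indepNum (boxPower 3 k) = (evenVertices 3 k).card :=
  indepNum_eq_card isIndepFinset_evenVertices fun T hT => by
    have := two_mul_card_le_of_isIndepFinset hT
    have := two_mul_card_evenVertices (k := k)
    omega

theorem boxPower_adj_cons_iff {a b : Fin m} {s t : Fin k → Fin m} :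
    (boxPower m (k + 1)).Adj (Fin.cons a s) (Fin.cons b t) ↔
      (pathGraph' m).Adj a b ∧ s = t ∨ a = b ∧ (boxPower m k).Adj s t := by
  constructor
  · rintro ⟨i, hi, heq⟩
    cases i using Fin.cases with
    | zero =>
      exact .inl ⟨by simpa using hi, funext fun j => by simpa using heq j.succ (Fin.succ_ne_zero j)⟩
    | succ i =>
      refine .inr ⟨by simpa using heq 0 (Fin.succ_ne_zero i).symm, i, by simpa using hi,
        fun j hj => by simpa using heq j.succ (by simpa using hj)⟩
  · rintro (⟨h, rfl⟩ | ⟨rfl, i, hi, heq⟩)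
    · refine ⟨0, by simpa using h, fun j hj => ?_⟩
      cases j using Fin.cases with
      | zero => exact absurd rfl hj
      | succ j => simp
    · refine ⟨i.succ, by simpa using hi, fun j hj => ?_⟩
      cases j using Fin.cases with
      | zero => simp
      | succ j => simpa using heq j (by simpa using hj)

def evenTailVertices (m k : ℕ) : Finset (Fin (k + 1) → Fin m) :=
  univ.filter fun u => Even (weight (Fin.tail u))

theorem card_evenTailVertices : (evenTailVertices m k).card = m * (evenVertices m k).card := by
  have : evenTailVertices m k =
      (univ ×ˢ evenVertices m k).map (Fin.consEquiv fun _ => Fin m).toEmbedding := by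
    ext u
    simp [evenTailVertices, evenVertices, Fin.consEquiv]
  rw [this, card_map, card_product, card_univ, Fintype.card_fin]

theorem adj_iff_of_mem_evenTailVertices {u v : Fin (k + 1) → Fin m}
    (hu : u ∈ evenTailVertices m k) (hv : v ∈ evenTailVertices m k) :
    (boxPower m (k + 1)).Adj u v ↔ (pathGraph' m).Adj (u 0) (v 0) ∧ Fin.tail u = Fin.tail v := by
  simp only [evenTailVertices, mem_filter, mem_univ, true_and] at hu hv
  rw [← Fin.cons_self_tail u, ← Fin.cons_self_tail v, boxPower_adj_cons_iff]
  simp only [Fin.cons_zero, Fin.tail_cons, or_iff_left_iff_imp]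
  exact fun ⟨_, h⟩ => absurd hv ((even_weight_iff_of_adj h).1 hu)

open scoped Classical in
theorem maxDegOn_evenTailVertices_three :
    maxDegOn (boxPower 3 (k + 1)) (evenTailVertices 3 k) = 2 := by
  set S := evenTailVertices 3 k
  apply le_antisymm
  · refine Finset.sup_le fun v hv => ?_
    have hsub : S.filter (fun u => (boxPower 3 (k + 1)).Adj v u) ⊆
        (univ.erase (v 0)).image fun a => Fin.cons a (Fin.tail v) := by
      intro u hu
      obtain ⟨huS, hvu⟩ := mem_filter.1 hu
      obtain ⟨h0, htail⟩ := (adj_iff_of_mem_evenTailVertices hv huS).1 hvu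
      exact mem_image.2 ⟨u 0, mem_erase.2 ⟨((pathGraph' 3).ne_of_adj h0).symm, mem_univ _⟩,
        by rw [htail, Fin.cons_self_tail]⟩
    calc _ ≤ _ := card_le_card hsub
      _ ≤ (univ.erase (v 0)).card := card_image_le
      _ = 2 := by simp
  · set c : Fin k → Fin 3 := fun _ => 0
    have hmem : ∀ a : Fin 3, Fin.cons a c ∈ S := fun a => by
      simp only [S, evenTailVertices, mem_filter, mem_univ, true_and, Fin.tail_cons]
      simp [weight, c]
    have hadj : ∀ a : Fin 3, (pathGraph' 3).Adj 1 a →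
        Fin.cons a c ∈ S.filter fun u => (boxPower 3 (k + 1)).Adj (Fin.cons 1 c) u := fun a ha =>
      mem_filter.2 ⟨hmem a,
        (adj_iff_of_mem_evenTailVertices (hmem 1) (hmem a)).2 (by simpa using ha)⟩
    have hpair : ({Fin.cons 0 c, Fin.cons 2 c} : Finset (Fin (k + 1) → Fin 3)).card = 2 :=
      card_pair fun h => by simpa using congrFun h 0
    calc 2 = _ := hpair.symm
      _ ≤ _ := card_le_card <|
        insert_subset (hadj 0 (.inr rfl)) (singleton_subset_iff.2 (hadj 2 (.inl rfl)))
      _ ≤ _ := le_sup (f := fun v => (S.filter fun u => (boxPower 3 (k + 1)).Adj v u).card) (hmem 1)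

/-- For every `k ≥ 1`, there is a set `S` of vertices of `P_3^k` with
`|S| = (3^k + 1)/2 + 1 = α(P_3^k) + 1` whose induced subgraph has maximum degree
exactly `2`. -/
theorem exists_set_maxDeg_two (k : ℕ) (hk : 1 ≤ k) :
    ∃ S : Finset (Fin k → Fin 3),
      S.card = (3 ^ k + 1) / 2 + 1 ∧
      S.card = indepNum (boxPower 3 k) + 1 ∧
      maxDegOn (boxPower 3 k) S = 2 := by
  obtain ⟨j, rfl⟩ : ∃ j, k = j + 1 := ⟨k - 1, by omega⟩
  have hcard : (evenTailVertices 3 j).card = 3 * (evenVertices 3 j).card := card_evenTailVertices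
  have hα : 2 * (evenVertices 3 j).card = 3 ^ j + 1 := two_mul_card_evenVertices
  have hα' : 2 * (evenVertices 3 (j + 1)).card = 3 ^ (j + 1) + 1 := two_mul_card_evenVertices
  rw [pow_succ] at hα' ⊢
  refine ⟨evenTailVertices 3 j, by omega, ?_, maxDegOn_evenTailVertices_three⟩
  rw [indepNum_boxPower_three]
  omega
end
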